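/- Let a_X, a_Y > −1, b_X, b_Y > 0, and let X and Y be independent random variables, where X is the square of a Gamma(a_X+1, b_X) random variable and Y is the square of a Gamma(a_Y+1, b_Y) random variable. Let λ, β, P, c > 0, a_m, a_n > 0 and γ > 0 with a_m > γ·a_n, and set U = β·P·X·Y/(λ·c). Then the outage probability of the distant user satisfies ℙ( a_m·U/(a_n·U + 1) < γ ) = (1/Γ(a_X+1)) ∫_0^∞ t^{a_X}·e^{−t} · (γ(a_Y+1, √(λ·γ·c/(β·P·(a_m − γ·a_n)))/(b_X·b_Y·t))/Γ(a_Y+1)) dt, where γ(s,x) = ∫_0^x u^{s−1}·e^{−u} du is the lower incomplete gamma function. -/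

import Mathlib

open MeasureTheory ProbabilityTheory

/-- Density of the square of a `Gamma(a+1, b)` random variable:
`x ↦ x^{(a−1)/2}·e^{−√x/b}/(2·b^{a+1}·Γ(a+1))` on `(0,∞)`. -/
noncomputable def sqGammaDensity (a b x : ℝ) : ℝ :=
  if 0 < x then
    x ^ ((a - 1) / 2) * Real.exp (-Real.sqrt x / b) / (2 * b ^ (a + 1) * Real.Gamma (a + 1))
  else 0

/-- The lower incomplete gamma function `γ(s, x) = ∫_0^x u^{s−1}·e^{−u} du`. -/
noncomputable def lincGamma (s x : ℝ) : ℝ :=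
  ∫ u in (0 : ℝ)..x, u ^ (s - 1) * Real.exp (-u)

/-!
For `X, Y ≥ 0` the SINR `a_m U/(a_n U + 1)` is below `γ` exactly when
`X Y < S := λγc/(βP(a_m − γa_n))`, and by independence `ℙ(X Y < S) = ∫ ℙ(Y < S/x) dℙ_X(x)`.
A squared-Gamma variable is `(b G)²` with `G ~ Gamma(a+1, 1)`: the substitution `x = (b u)²`
turns its density into `u^a e^{−u}/Γ(a+1)` on `(0, ∞)`. This gives the CDF
`ℙ(Y < r) = γ(a_Y+1, √r/b_Y)/Γ(a_Y+1)` and, in the outer integral over `x = (b_X t)²`,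
`√(S/x)/b_Y = √S/(b_X b_Y t)`.
-/

open Set Real
open scoped ENNReal

theorem sqGammaDensity_of_nonpos (a b : ℝ) {x : ℝ} (hx : x ≤ 0) : sqGammaDensity a b x = 0 :=
  if_neg hx.not_gt

theorem measurable_sqGammaDensity (a b : ℝ) : Measurable (sqGammaDensity a b) :=
  Measurable.ite measurableSet_Ioi (by fun_prop) measurable_const

theorem two_mul_sq_mul_sqGammaDensity (a : ℝ) {b u : ℝ} (hb : 0 < b) (hu : 0 < u) :
    2 * b ^ 2 * u * sqGammaDensity a b ((b * u) ^ 2) = u ^ a * exp (-u) / Gamma (a + 1) := by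
  have hbu : 0 < b * u := mul_pos hb hu
  have hpow : ((b * u) ^ 2) ^ ((a - 1) / 2) = b ^ (a - 1) * u ^ (a - 1) := by
    rw [← rpow_natCast, ← rpow_mul hbu.le, mul_rpow hb.le hu.le]
    norm_num [mul_div_cancel₀]
  have hb_pow : b ^ (a + 1) = b ^ 2 * b ^ (a - 1) := by
    rw [← rpow_natCast, ← rpow_add hb]; norm_num; ring_nf
  have hu_pow : u ^ a = u * u ^ (a - 1) := by
    conv_lhs => rw [← add_sub_cancel 1 a, rpow_add hu, rpow_one]
  have hb_pow_ne : b ^ (a - 1) ≠ 0 := (rpow_pos_of_pos hb _).ne'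
  rw [sqGammaDensity, if_pos (by positivity), sqrt_sq hbu.le, hpow, hb_pow, hu_pow, neg_div,
    mul_div_cancel_left₀ u hb.ne']
  simp only [div_eq_mul_inv, mul_inv]
  -- `Γ(a+1)` is a common factor and may vanish, so it is kept out of `field_simp`'s reach
  generalize (Gamma (a + 1))⁻¹ = G
  field_simp

theorem image_sq_mul_Ioi {b : ℝ} (hb : 0 < b) : (fun u : ℝ => (b * u) ^ 2) '' Ioi 0 = Ioi 0 := by
  ext y
  refine ⟨fun ⟨u, hu, hy⟩ => hy ▸ by simp only [mem_Ioi] at hu ⊢; positivity, fun hy => ?_⟩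
  refine ⟨sqrt y / b, div_pos (sqrt_pos.2 hy) hb, ?_⟩
  simp only [mul_div_cancel₀ _ hb.ne', sq_sqrt (le_of_lt hy)]

theorem lintegral_withDensity_sqGammaDensity (a : ℝ) {b : ℝ} (hb : 0 < b) {f : ℝ → ℝ≥0∞}
    (hf : Measurable f) :
    ∫⁻ x, f x ∂(volume.withDensity fun x => ENNReal.ofReal (sqGammaDensity a b x)) =
      ∫⁻ u in Ioi 0, ENNReal.ofReal (u ^ a * exp (-u) / Gamma (a + 1)) * f ((b * u) ^ 2) := by
  set d := fun x => ENNReal.ofReal (sqGammaDensity a b x)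
  have hsupp : (d * f).support ⊆ Ioi 0 :=
    fun x hx => mem_Ioi.2 <| not_le.1 fun h => hx (by simp [d, sqGammaDensity_of_nonpos a b h])
  have hderiv : ∀ u ∈ Ioi (0 : ℝ),
      HasDerivWithinAt (fun u => (b * u) ^ 2) (2 * b ^ 2 * u) (Ioi 0) u := fun u _ => by
    have := ((hasDerivAt_id' u).const_mul b).pow 2
    exact this.hasDerivWithinAt.congr_deriv (by ring)
  have hmono : MonotoneOn (fun u : ℝ => (b * u) ^ 2) (Ioi 0) := fun u hu v _ huv => by
    dsimp only; simp only [mem_Ioi] at hu; gcongr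
  calc ∫⁻ x, f x ∂(volume.withDensity d)
      = ∫⁻ x in (fun u => (b * u) ^ 2) '' Ioi 0, (d * f) x := by
        rw [lintegral_withDensity_eq_lintegral_mul _
            (measurable_sqGammaDensity a b).ennreal_ofReal hf, image_sq_mul_Ioi hb,
          setLIntegral_eq_of_support_subset hsupp]
    _ = ∫⁻ u in Ioi 0, ENNReal.ofReal (2 * b ^ 2 * u) * (d * f) ((b * u) ^ 2) :=
        lintegral_image_eq_lintegral_deriv_mul_of_monotoneOn measurableSet_Ioi hderiv hmono _
    _ = _ := setLIntegral_congr_fun measurableSet_Ioi fun u (hu : 0 < u) => by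
        rw [Pi.mul_apply, ← mul_assoc, ← ENNReal.ofReal_mul (by positivity),
          two_mul_sq_mul_sqGammaDensity a hb hu]

theorem ae_nonneg_of_map_eq_withDensity_sqGammaDensity {Ω : Type*} [MeasurableSpace Ω]
    {μ : Measure Ω} {X : Ω → ℝ} (hX : Measurable X) {a b : ℝ}
    (hlaw : μ.map X = volume.withDensity fun x => ENNReal.ofReal (sqGammaDensity a b x)) :
    ∀ᵐ ω ∂μ, 0 ≤ X ω := by
  refine ae_of_ae_map hX.aemeasurable ?_
  rw [hlaw, ae_withDensity_iff (measurable_sqGammaDensity a b).ennreal_ofReal]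
  refine ae_of_all _ fun x hx => not_lt.1 fun h => hx ?_
  rw [sqGammaDensity_of_nonpos a b h.le, ENNReal.ofReal_zero]

theorem integrableOn_rpow_mul_exp_neg {a : ℝ} (ha : -1 < a) :
    IntegrableOn (fun u : ℝ => u ^ a * exp (-u)) (Ioi 0) := by
  simpa using integrableOn_rpow_mul_exp_neg_rpow ha one_pos

theorem lincGamma_monotoneOn {s : ℝ} (hs : 0 < s) : MonotoneOn (lincGamma s) (Ici 0) :=
  fun x hx y _ hxy => by
    have hint := integrableOn_rpow_mul_exp_neg (a := s - 1) (by linarith)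
    refine intervalIntegral.integral_mono_interval le_rfl hx hxy ?_
      ((intervalIntegrable_iff_integrableOn_Ioc_of_le (hx.trans hxy)).2
        (hint.mono_set Ioc_subset_Ioi_self))
    filter_upwards [self_mem_ae_restrict measurableSet_Ioc] with u hu
    exact mul_nonneg (rpow_nonneg hu.1.le _) (exp_nonneg _)

theorem lincGamma_nonneg {s x : ℝ} (hs : 0 < s) (hx : 0 ≤ x) : 0 ≤ lincGamma s x := by
  simpa [lincGamma] using lincGamma_monotoneOn hs (mem_Ici.2 le_rfl) hx hx

theorem aemeasurable_lincGamma_div_mul {s k c : ℝ} (hs : 0 < s) (hk : 0 ≤ k) (hc : 0 < c) :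
    AEMeasurable (fun t => lincGamma s (k / (c * t))) (volume.restrict (Ioi 0)) :=
  aemeasurable_restrict_of_antitoneOn measurableSet_Ioi <|
    MonotoneOn.comp_AntitoneOn (lincGamma_monotoneOn hs)
      (fun _ ht _ _ htt' => by simp only [mem_Ioi] at ht; gcongr)
      (fun _ ht => by simp only [mem_Ioi] at ht; exact mem_Ici.2 (by positivity))

theorem toReal_lintegral_ofReal_gamma_mul_lincGamma {a s k c : ℝ} (ha : -1 < a) (hs : 0 < s)
    (hk : 0 ≤ k) (hc : 0 < c) :
    (∫⁻ t in Ioi 0, ENNReal.ofReal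
        (t ^ a * exp (-t) / Gamma (a + 1) * (lincGamma s (k / (c * t)) / Gamma s))).toReal =
      1 / Gamma (a + 1) *
        ∫ t in Ioi 0, t ^ a * exp (-t) * (lincGamma s (k / (c * t)) / Gamma s) := by
  have hΓa : 0 < Gamma (a + 1) := Gamma_pos_of_pos (by linarith)
  have hΓs : 0 < Gamma s := Gamma_pos_of_pos hs
  rw [← integral_eq_lintegral_of_nonneg_ae, ← integral_const_mul]
  · congr 1 with t
    ring
  · filter_upwards [self_mem_ae_restrict measurableSet_Ioi] with t (ht : 0 < t)
    have := lincGamma_nonneg hs (by positivity : 0 ≤ k / (c * t))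
    positivity
  · exact ((by fun_prop : Measurable fun t : ℝ => t ^ a * exp (-t) / Gamma (a + 1)).aemeasurable.mul
      ((aemeasurable_lincGamma_div_mul hs hk hc).div_const _)).aestronglyMeasurable

theorem withDensity_sqGammaDensity_Iio {a b r : ℝ} (ha : -1 < a) (hb : 0 < b) :
    (volume.withDensity fun x => ENNReal.ofReal (sqGammaDensity a b x)) (Iio r) =
      ENNReal.ofReal (lincGamma (a + 1) (sqrt r / b) / Gamma (a + 1)) := by
  set z := sqrt r / b
  have hz : 0 ≤ z := by positivity
  have hmem : ∀ u ∈ Ioi (0 : ℝ), (b * u) ^ 2 ∈ Iio r ↔ u ∈ Iio z := fun u (hu : 0 < u) => by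
    rw [mem_Iio, mem_Iio, lt_div_iff₀ hb, mul_comm u b, lt_sqrt (mul_pos hb hu).le]
  have hintegrand : ∀ u ∈ Ioi (0 : ℝ),
      ENNReal.ofReal (u ^ a * exp (-u) / Gamma (a + 1)) * (Iio r).indicator 1 ((b * u) ^ 2) =
        (Iio z).indicator (fun u => ENNReal.ofReal (u ^ a * exp (-u) / Gamma (a + 1))) u :=
    fun u hu => by simp only [indicator_apply, hmem u hu]; split_ifs <;> simp
  rw [← lintegral_indicator_one measurableSet_Iio,
    lintegral_withDensity_sqGammaDensity a hb (measurable_one.indicator measurableSet_Iio),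
    setLIntegral_congr_fun measurableSet_Ioi hintegrand, lintegral_indicator measurableSet_Iio,
    Measure.restrict_restrict measurableSet_Iio, Iio_inter_Ioi,
    ← ofReal_integral_eq_lintegral_ofReal, lincGamma, intervalIntegral.integral_of_le hz,
    integral_Ioc_eq_integral_Ioo, ← integral_div, add_sub_cancel_right]
  · exact ((integrableOn_rpow_mul_exp_neg ha).mono_set Ioo_subset_Ioi_self).div_const _
  · filter_upwards [self_mem_ae_restrict measurableSet_Ioo] with u hu
    have : 0 < Gamma (a + 1) := Gamma_pos_of_pos (by linarith)
    exact div_nonneg (mul_nonneg (rpow_nonneg hu.1.le _) (exp_nonneg _)) this.le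

theorem ProbabilityTheory.IndepFun.measure_preimage_prodMk {Ω β γ : Type*}
    [MeasurableSpace Ω] [MeasurableSpace β] [MeasurableSpace γ] {μ : Measure Ω} {X : Ω → β} {Y : Ω → γ} (hX : Measurable X)
    (hY : Measurable Y) (hXY : IndepFun X Y μ) [SigmaFinite (μ.map X)] [SigmaFinite (μ.map Y)]
    {A : Set (β × γ)} (hA : MeasurableSet A) :
    μ ((fun ω => (X ω, Y ω)) ⁻¹' A) = ∫⁻ x, μ.map Y (Prod.mk x ⁻¹' A) ∂(μ.map X) := by
  rw [← Measure.map_apply (hX.prodMk hY) hA,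
    (indepFun_iff_map_prod_eq_prod_map_map' hX.aemeasurable hY.aemeasurable ‹_› ‹_›).1 hXY,
    Measure.prod_apply hA]

theorem prodMk_preimage_mul_lt {x : ℝ} (hx : 0 < x) (S : ℝ) :
    Prod.mk x ⁻¹' {p : ℝ × ℝ | p.1 * p.2 < S} = Iio (S / x) := by
  ext y
  simp only [mem_preimage, mem_ofPred_eq, mem_Iio, lt_div_iff₀ hx, mul_comm]

theorem sinr_lt_iff {am an g u : ℝ} (han : 0 ≤ an) (hcond : g * an < am) (hu : 0 ≤ u) :
    am * u / (an * u + 1) < g ↔ u < g / (am - g * an) := by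
  rw [div_lt_iff₀ (by positivity), lt_div_iff₀ (by linarith)]
  constructor <;> intro h <;> linarith

theorem sinr_lt_iff_mul_lt {lam β P c am an g x y : ℝ} (hlam : 0 < lam) (hβ : 0 < β) (hP : 0 < P)
    (hc : 0 < c) (han : 0 ≤ an) (hcond : g * an < am) (hx : 0 ≤ x) (hy : 0 ≤ y) :
    am * (β * P * x * y / (lam * c)) / (an * (β * P * x * y / (lam * c)) + 1) < g ↔
      x * y < lam * g * c / (β * P * (am - g * an)) := by
  have hD : 0 < am - g * an := by linarith
  rw [sinr_lt_iff han hcond (by positivity), div_lt_div_iff₀ (by positivity) hD,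
    lt_div_iff₀ (by positivity)]
  constructor <;> intro h <;> linarith

theorem outage_Dm_general {α : Type*} [MeasurableSpace α]
    (μ : Measure α)
    (aX aY bX bY : ℝ) (haX : -1 < aX) (haY : -1 < aY) (hbX : 0 < bX) (hbY : 0 < bY)
    (X Y : α → ℝ) (hX : Measurable X) (hY : Measurable Y)
    (hXY : IndepFun X Y μ)
    (hXlaw : Measure.map X μ =
      volume.withDensity (fun x => ENNReal.ofReal (sqGammaDensity aX bX x)))
    (hYlaw : Measure.map Y μ =
      volume.withDensity (fun y => ENNReal.ofReal (sqGammaDensity aY bY y)))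
    (lam β P c am an g : ℝ) (hlam : 0 < lam) (hβ : 0 < β) (hP : 0 < P) (hc : 0 < c)
    (han : 0 < an) (hcond : g * an < am)
    (U : α → ℝ) (hU : U = fun ω => β * P * X ω * Y ω / (lam * c)) :
    (μ {ω | am * U ω / (an * U ω + 1) < g}).toReal =
      (1 / Real.Gamma (aX + 1)) *
        ∫ t in Set.Ioi (0 : ℝ),
          t ^ aX * Real.exp (-t) *
            (lincGamma (aY + 1)
                (Real.sqrt (lam * g * c / (β * P * (am - g * an))) / (bX * bY * t)) /
              Real.Gamma (aY + 1)) := by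
  set S := lam * g * c / (β * P * (am - g * an))
  have hΓX : 0 < Gamma (aX + 1) := Gamma_pos_of_pos (by linarith)
  have hevent : {ω | am * U ω / (an * U ω + 1) < g} =ᵐ[μ]
      (fun ω => (X ω, Y ω)) ⁻¹' {p | p.1 * p.2 < S} := by
    simp only [hU]
    filter_upwards [ae_nonneg_of_map_eq_withDensity_sqGammaDensity hX hXlaw,
      ae_nonneg_of_map_eq_withDensity_sqGammaDensity hY hYlaw] with ω hXω hYω
    exact propext (sinr_lt_iff_mul_lt hlam hβ hP hc han.le hcond hXω hYω)
  have hslice : ∀ u ∈ Ioi (0 : ℝ), μ.map Y (Prod.mk ((bX * u) ^ 2) ⁻¹' {p | p.1 * p.2 < S}) =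
      ENNReal.ofReal (lincGamma (aY + 1) (sqrt S / (bX * bY * u)) / Gamma (aY + 1)) :=
    fun u (hu : 0 < u) => by
      rw [prodMk_preimage_mul_lt (by positivity), hYlaw, withDensity_sqGammaDensity_Iio haY hbY,
        sqrt_div' _ (by positivity), sqrt_sq (by positivity), div_div, mul_right_comm]
  have hA : MeasurableSet {p : ℝ × ℝ | p.1 * p.2 < S} :=
    measurableSet_lt (by fun_prop) measurable_const
  have : SigmaFinite (μ.map X) := hXlaw ▸ inferInstance
  have : SigmaFinite (μ.map Y) := hYlaw ▸ inferInstance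
  rw [measure_congr hevent, hXY.measure_preimage_prodMk hX hY hA, hXlaw,
    lintegral_withDensity_sqGammaDensity aX hbX (measurable_measure_prodMk_left hA),
    setLIntegral_congr_fun measurableSet_Ioi fun u (hu : 0 < u) => by
      rw [hslice u hu, ← ENNReal.ofReal_mul (by positivity)],
    toReal_lintegral_ofReal_gamma_mul_lincGamma haX (by linarith) (sqrt_nonneg S)
      (mul_pos hbX hbY)]

/-- exact (pre-quadrature) form of Theorem 2 of the paper: the outage
probability of the distant user, whose SINR is `a_m·U/(a_n·U + 1)` with
`U = β·P·X·Y/(λ·c)`. -/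
theorem outage_Dm {α : Type*} [MeasurableSpace α]
    (μ : Measure α) [IsProbabilityMeasure μ]
    (aX aY bX bY : ℝ) (haX : -1 < aX) (haY : -1 < aY) (hbX : 0 < bX) (hbY : 0 < bY)
    (X Y : α → ℝ) (hX : Measurable X) (hY : Measurable Y)
    (hXY : IndepFun X Y μ)
    (hXlaw : Measure.map X μ =
      volume.withDensity (fun x => ENNReal.ofReal (sqGammaDensity aX bX x)))
    (hYlaw : Measure.map Y μ =
      volume.withDensity (fun y => ENNReal.ofReal (sqGammaDensity aY bY y)))
    (lam β P c am an g : ℝ) (hlam : 0 < lam) (hβ : 0 < β) (hP : 0 < P) (hc : 0 < c)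
    (ham : 0 < am) (han : 0 < an) (hg : 0 < g) (hcond : g * an < am)
    (U : α → ℝ) (hU : U = fun ω => β * P * X ω * Y ω / (lam * c)) :
    (μ {ω | am * U ω / (an * U ω + 1) < g}).toReal =
      (1 / Real.Gamma (aX + 1)) *
        ∫ t in Set.Ioi (0 : ℝ),
          t ^ aX * Real.exp (-t) *
            (lincGamma (aY + 1)
                (Real.sqrt (lam * g * c / (β * P * (am - g * an))) / (bX * bY * t)) /
              Real.Gamma (aY + 1)) :=
  outage_Dm_general μ aX aY bX bY haX haY hbX hbY X Y hX hY hXY hXlaw hYlaw lam β P c am an g hlam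
    hβ hP hc han hcond U hU
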